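/- arXiv:1203.0136 — 5 statements merged into one kernel-verified Lean document; each statement's English description precedes it below -/
import Mathlib

section
/- For all 2×2 complex matrices M₁ = !![a₁,b₁;c₁,d₁] and M₂ = !![a₂,b₂;c₂,d₂] of determinant 1, and for all 2×2 blocks A, B, C, D over ℂ, one has ρ(M₁)(ρ(M₂)(fromBlocks A B C D)) = ρ(M₁*M₂)(fromBlocks A B C D); that is, ρ : SL₂(ℂ) → Aut(gl(2|2)) is a group homomorphism. -/
open Matrix

/-- `Ψ(F) = J * Fᵀ * J` where `J = !![0,1;-1,0]`. -/
noncomputable def Psi (F : Matrix (Fin 2) (Fin 2) ℂ) : Matrix (Fin 2) (Fin 2) ℂ :=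
  !![0, 1; -1, 0] * Fᵀ * !![0, 1; -1, 0]

/-- The map `ρ(S)` on `gl(2|2)` for `S = !![a,b;c,d]`:
`fromBlocks A B C D ↦ fromBlocks A (a•B + b•Ψ(C)) (c•Ψ(B) + d•C) D`. -/
noncomputable def rho (S : Matrix (Fin 2) (Fin 2) ℂ)
    (M : Matrix (Fin 2 ⊕ Fin 2) (Fin 2 ⊕ Fin 2) ℂ) :
    Matrix (Fin 2 ⊕ Fin 2) (Fin 2 ⊕ Fin 2) ℂ :=
  fromBlocks M.toBlocks₁₁
    (S 0 0 • M.toBlocks₁₂ + S 0 1 • Psi M.toBlocks₂₁)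
    (S 1 0 • Psi M.toBlocks₁₂ + S 1 1 • M.toBlocks₂₁)
    M.toBlocks₂₂

lemma Psi_eq (F : Matrix (Fin 2) (Fin 2) ℂ) :
    Psi F = !![-F 1 1, F 0 1; F 1 0, -F 0 0] := by
  ext i j
  fin_cases i <;> fin_cases j <;>
    simp [Psi, Matrix.mul_apply, Fin.sum_univ_two, Matrix.vecMul, dotProduct]

lemma Psi_add (F G : Matrix (Fin 2) (Fin 2) ℂ) : Psi (F + G) = Psi F + Psi G := by
  ext i j
  fin_cases i <;> fin_cases j <;>
    simp [Psi_eq] <;> ring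

lemma Psi_smul (c : ℂ) (F : Matrix (Fin 2) (Fin 2) ℂ) : Psi (c • F) = c • Psi F := by
  ext i j
  fin_cases i <;> fin_cases j <;> simp [Psi_eq]

lemma Psi_Psi (F : Matrix (Fin 2) (Fin 2) ℂ) : Psi (Psi F) = F := by
  ext i j
  fin_cases i <;> fin_cases j <;> simp [Psi_eq]

/-- `ρ : SL₂(ℂ) → Aut(gl(2|2))` is multiplicative: `ρ(M₁) ∘ ρ(M₂) = ρ(M₁ * M₂)`. -/
theorem rho_comp_rho (a₁ b₁ c₁ d₁ a₂ b₂ c₂ d₂ : ℂ)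
    (h₁ : (!![a₁, b₁; c₁, d₁] : Matrix (Fin 2) (Fin 2) ℂ).det = 1)
    (h₂ : (!![a₂, b₂; c₂, d₂] : Matrix (Fin 2) (Fin 2) ℂ).det = 1)
    (A B C D : Matrix (Fin 2) (Fin 2) ℂ) :
    rho !![a₁, b₁; c₁, d₁] (rho !![a₂, b₂; c₂, d₂] (fromBlocks A B C D)) =
      rho (!![a₁, b₁; c₁, d₁] * !![a₂, b₂; c₂, d₂]) (fromBlocks A B C D) := by
  simp only [rho, Matrix.toBlocks_fromBlocks₁₁, Matrix.toBlocks_fromBlocks₁₂,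
    Matrix.toBlocks_fromBlocks₂₁, Matrix.toBlocks_fromBlocks₂₂,
    Psi_add, Psi_smul, Psi_Psi, Matrix.mul_apply, Fin.sum_univ_two]
  rw [Matrix.fromBlocks_inj]
  refine ⟨rfl, ?_, ?_, rfl⟩ <;> module
end

section
/- For all n×n blocks A, B, C, D over ℂ, one has τ(π(fromBlocks A B C D)) = π(τ(ȷ(-1)(fromBlocks A B C D))) and also τ(π(fromBlocks A B C D)) = π(τ(τ(τ(fromBlocks A B C D)))); that is, τπ = πτȷ(-1) = πτ³ on gl(n|n). -/
open Matrix

/-- The map `ȷ(λ)` on `gl(n|n)`. -/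
noncomputable def jmap {n : ℕ} (l : ℂ)
    (M : Matrix (Fin n ⊕ Fin n) (Fin n ⊕ Fin n) ℂ) :
    Matrix (Fin n ⊕ Fin n) (Fin n ⊕ Fin n) ℂ :=
  fromBlocks M.toBlocks₁₁ (l • M.toBlocks₁₂) (l⁻¹ • M.toBlocks₂₁) M.toBlocks₂₂

/-- The supertransposition `τ` on `gl(n|n)`. -/
def tau {n : ℕ} (M : Matrix (Fin n ⊕ Fin n) (Fin n ⊕ Fin n) ℂ) :
    Matrix (Fin n ⊕ Fin n) (Fin n ⊕ Fin n) ℂ :=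
  fromBlocks (-(M.toBlocks₁₁)ᵀ) (M.toBlocks₂₁)ᵀ (-(M.toBlocks₁₂)ᵀ) (-(M.toBlocks₂₂)ᵀ)

/-- The map `π` on `gl(n|n)`: `fromBlocks A B C D ↦ fromBlocks D C B A`. -/
def piMap {n : ℕ} (M : Matrix (Fin n ⊕ Fin n) (Fin n ⊕ Fin n) ℂ) :
    Matrix (Fin n ⊕ Fin n) (Fin n ⊕ Fin n) ℂ :=
  fromBlocks M.toBlocks₂₂ M.toBlocks₂₁ M.toBlocks₁₂ M.toBlocks₁₁

/-- `τπ = πτȷ(-1) = πτ³` on `gl(n|n)`. -/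
theorem tau_comp_pi {n : ℕ} (A B C D : Matrix (Fin n) (Fin n) ℂ) :
    tau (piMap (fromBlocks A B C D)) = piMap (tau (jmap (-1) (fromBlocks A B C D))) ∧
    tau (piMap (fromBlocks A B C D)) = piMap (tau (tau (tau (fromBlocks A B C D)))) := by
  refine ⟨?_, ?_⟩ <;>
    simp [tau, piMap, jmap, toBlocks_fromBlocks₁₁, toBlocks_fromBlocks₁₂,
      toBlocks_fromBlocks₂₁, toBlocks_fromBlocks₂₂, transpose_neg, transpose_smul] <;>
    norm_num
end

section
/- For all invertible 2×2 complex matrices X, Y of determinant 1, every 2×2 matrix M = !![a,b;c,d] of determinant 1, and all 2×2 blocks A, B, C, D over ℂ, one has Ad(X,Y)(ρ(M)(fromBlocks A B C D)) = ρ(M)(Ad(X,Y)(fromBlocks A B C D)); that is, Ad(X,Y) ∘ ρ(M) = ρ(M) ∘ Ad(X,Y) on gl(2|2). -/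
open Matrix

/-- The map `Ad(X,Y)` on `gl(2|2)`. -/
noncomputable def Ad (X Y : Matrix (Fin 2) (Fin 2) ℂ)
    (M : Matrix (Fin 2 ⊕ Fin 2) (Fin 2 ⊕ Fin 2) ℂ) :
    Matrix (Fin 2 ⊕ Fin 2) (Fin 2 ⊕ Fin 2) ℂ :=
  fromBlocks (X * M.toBlocks₁₁ * X⁻¹) (X * M.toBlocks₁₂ * Y⁻¹)
    (Y * M.toBlocks₂₁ * X⁻¹) (Y * M.toBlocks₂₂ * Y⁻¹)

lemma psi_adj (F : Matrix (Fin 2) (Fin 2) ℂ) :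
    (!![0, 1; -1, 0] * Fᵀ * !![0, 1; -1, 0] : Matrix (Fin 2) (Fin 2) ℂ) = -F.adjugate := by
  ext i j
  fin_cases i <;> fin_cases j <;>
    simp [Matrix.mul_apply, Matrix.vecMul, dotProduct, Fin.sum_univ_two,
      Matrix.adjugate_fin_two]

lemma adj_eq_inv {X : Matrix (Fin 2) (Fin 2) ℂ} (hX : X.det = 1) : X.adjugate = X⁻¹ := by
  rw [Matrix.inv_def, hX]; simp

lemma psi_mul (X Y F : Matrix (Fin 2) (Fin 2) ℂ) (hX : X.det = 1) (hY : Y.det = 1) :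
    (!![0, 1; -1, 0] * (X * F * Y⁻¹)ᵀ * !![0, 1; -1, 0] : Matrix (Fin 2) (Fin 2) ℂ)
      = Y * (!![0, 1; -1, 0] * Fᵀ * !![0, 1; -1, 0]) * X⁻¹ := by
  have hYu : IsUnit Y.det := by simp [hY]
  have hY' : (Y⁻¹).det = 1 := by simp [Matrix.det_nonsing_inv, hY]
  rw [psi_adj, psi_adj, Matrix.adjugate_mul_distrib, Matrix.adjugate_mul_distrib,
    adj_eq_inv hX, adj_eq_inv hY', Matrix.nonsing_inv_nonsing_inv Y hYu]
  noncomm_ring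

/-- `Ad(X,Y) ∘ ρ(M) = ρ(M) ∘ Ad(X,Y)` on `gl(2|2)`. -/
theorem Ad_comp_rho (X Y : Matrix (Fin 2) (Fin 2) ℂ)
    (hX : X.det = 1) (hY : Y.det = 1) (a b c d : ℂ)
    (hM : (!![a, b; c, d] : Matrix (Fin 2) (Fin 2) ℂ).det = 1)
    (A B C D : Matrix (Fin 2) (Fin 2) ℂ) :
    Ad X Y (rho !![a, b; c, d] (fromBlocks A B C D)) =
      rho !![a, b; c, d] (Ad X Y (fromBlocks A B C D)) := by
  simp only [Ad, rho, Psi, toBlocks_fromBlocks₁₁, toBlocks_fromBlocks₁₂,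
    toBlocks_fromBlocks₂₁, toBlocks_fromBlocks₂₂]
  rw [psi_mul X Y B hX hY, psi_mul Y X C hY hX]
  simp only [Matrix.mul_add, Matrix.add_mul, Matrix.mul_smul, Matrix.smul_mul]
end

section
/- Let m ≥ 2 and n ≥ 1, and work in the (m+n)×(m+n) complex matrices. Set x = E 1 (m+1), y = E 1 2, z = E 2 1. If λ ∈ ℂ satisfies ⁅λ • x, ⁅y, z⁆⁆ + ⁅y, ⁅z, x⁆⁆ + ⁅z, ⁅x, y⁆⁆ = 0, then λ = 1. (This is the graded Hom-Jacobi identity for the automorphism ȷ(λ) of sl(m|n) evaluated at the odd element x and the even elements y, z, and it forces ȷ(λ) = id.) -/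
open Matrix

/-!
With `x = E₁ₖ`, `y = E₁₂`, `z = E₂₁` (`k = m + 1`) the three brackets are `⁅λx, ⁅y, z⁆⁆ = -λx`,
`⁅y, ⁅z, x⁆⁆ = ⁅E₁₂, E₂ₖ⁆ = x` and `⁅z, ⁅x, y⁆⁆ = 0`, so the Hom-Jacobi sum is `(1 - λ) x`,
which vanishes only for `λ = 1`.
-/

namespace Matrix

attribute [local instance] LieRing.ofAssociativeRing

variable {ι R : Type*} [Fintype ι] [DecidableEq ι]

section Ring

variable [Ring R]

theorem lie_single_single_swap (i j : ι) :
    ⁅single i j (1 : R), single j i (1 : R)⁆ = single i i 1 - single j j 1 := by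
  rw [Ring.lie_def, single_mul_single_same, single_mul_single_same, mul_one]

theorem lie_single_single_chain {i j k : ι} (hki : k ≠ i) :
    ⁅single i j (1 : R), single j k (1 : R)⁆ = single i k 1 := by
  rw [Ring.lie_def, single_mul_single_same, single_mul_single_of_ne (h := hki), mul_one, sub_zero]

theorem lie_single_single_eq_zero {i j k l : ι} (hjk : j ≠ k) (hli : l ≠ i) :
    ⁅single i j (1 : R), single k l (1 : R)⁆ = 0 := by
  rw [Ring.lie_def, single_mul_single_of_ne (h := hjk), single_mul_single_of_ne (h := hli),
    sub_zero]

theorem lie_single_lie_single_single_swap {i j k : ι} (hij : i ≠ j) (hki : k ≠ i)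
    (hkj : k ≠ j) :
    ⁅single i k (1 : R), ⁅single i j (1 : R), single j i (1 : R)⁆⁆ = -single i k 1 := by
  rw [lie_single_single_swap, lie_sub, ← lie_skew, lie_single_single_chain hki,
    lie_single_single_eq_zero hkj hij.symm, sub_zero]

end Ring

theorem homJacobi_smul_single [CommRing R] (c : R) {i j k : ι} (hij : i ≠ j) (hki : k ≠ i)
    (hkj : k ≠ j) :
    ⁅c • single i k (1 : R), ⁅single i j (1 : R), single j i (1 : R)⁆⁆
        + ⁅single i j (1 : R), ⁅single j i (1 : R), single i k (1 : R)⁆⁆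
        + ⁅single j i (1 : R), ⁅single i k (1 : R), single i j (1 : R)⁆⁆ =
      (1 - c) • single i k 1 := by
  rw [smul_lie, lie_single_lie_single_single_swap hij hki hkj, lie_single_single_chain hkj,
    lie_single_single_chain hki, lie_single_single_eq_zero hki hij.symm, lie_zero,
    add_zero, sub_smul, one_smul, smul_neg, neg_add_eq_sub]

end Matrix

/-- The Hom-Jacobi identity for `ȷ(λ)` on `sl(m|n)` at `x = E 1 (m+1)`, `y = E 1 2`,
`z = E 2 1` (1-based indexing) forces `λ = 1`. -/
theorem jmap_homJacobi_sl_forces_lambda_eq_one (m n : ℕ) (hm : 2 ≤ m) (hn : 1 ≤ n) (l : ℂ)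
    (x y z : Matrix (Fin (m + n)) (Fin (m + n)) ℂ)
    (hx : x = Matrix.single ⟨0, by omega⟩ ⟨m, by omega⟩ (1 : ℂ))
    (hy : y = Matrix.single ⟨0, by omega⟩ ⟨1, by omega⟩ (1 : ℂ))
    (hz : z = Matrix.single ⟨1, by omega⟩ ⟨0, by omega⟩ (1 : ℂ))
    (h : ⁅l • x, ⁅y, z⁆⁆ + ⁅y, ⁅z, x⁆⁆ + ⁅z, ⁅x, y⁆⁆ = 0) :
    l = 1 := by
  subst hx hy hz
  have h01 : (⟨0, by omega⟩ : Fin (m + n)) ≠ ⟨1, by omega⟩ := mt Fin.mk_eq_mk.mp (by omega)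
  have hm0 : (⟨m, by omega⟩ : Fin (m + n)) ≠ ⟨0, by omega⟩ := mt Fin.mk_eq_mk.mp (by omega)
  have hm1 : (⟨m, by omega⟩ : Fin (m + n)) ≠ ⟨1, by omega⟩ := mt Fin.mk_eq_mk.mp (by omega)
  rw [homJacobi_smul_single l h01 hm0 hm1] at h
  have hentry := congr_fun₂ h ⟨0, by omega⟩ ⟨m, by omega⟩
  rw [Matrix.smul_apply, single_apply_same, smul_eq_mul, mul_one, Matrix.zero_apply,
    sub_eq_zero] at hentry
  exact hentry.symm
end

section
/- Let n ≥ 3 and work in the 2n×2n complex matrices. Set x = E 1 1 - E 2 2 - E (n+1) (n+1) + E (n+2) (n+2), y = E 1 2, and z = E 1 (n+2) + E 2 (n+1). If λ ∈ ℂ satisfies ⁅x, ⁅y, z⁆⁆ + ⁅y, ⁅z, x⁆⁆ + λ • ⁅z, ⁅x, y⁆⁆ = 0, then λ = 1. (This is the graded Hom-Jacobi identity for the automorphism ȷ(λ) of the periplectic Lie superalgebra P(n-1) evaluated at the even elements x, y and the odd element z, and it forces ȷ(λ) = id.) -/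
open Matrix

/-!
`x` is diagonal, so `ad x` acts on each matrix unit `E i j` by the scalar `x i i - x j j`:
`y` is an eigenvector of weight `2` and `z` one of weight `0`. Jacobi then makes `⁅y, z⁆ = E 1 (n+1)`
an eigenvector of weight `2` as well, and the Hom-Jacobi relation collapses to
`2 (1 - λ) • ⁅y, z⁆ = 0`.
-/

section HomJacobi

variable {K L : Type*} [Field K] [LieRing L] [LieAlgebra K L]

theorem eq_one_of_lie_add_lie_add_smul_lie_eq_zero {x y z : L} {μ l : K} (hμ : μ ≠ 0)
    (hxy : ⁅x, y⁆ = μ • y) (hxz : ⁅x, z⁆ = 0) (hyz : ⁅y, z⁆ ≠ 0)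
    (h : ⁅x, ⁅y, z⁆⁆ + ⁅y, ⁅z, x⁆⁆ + l • ⁅z, ⁅x, y⁆⁆ = 0) : l = 1 := by
  have hx_yz : ⁅x, ⁅y, z⁆⁆ = μ • ⁅y, z⁆ := by
    rw [leibniz_lie, hxy, hxz, smul_lie, lie_zero, add_zero]
  have hzx : ⁅z, x⁆ = 0 := by rw [← lie_skew, hxz, neg_zero]
  have hz_xy : ⁅z, ⁅x, y⁆⁆ = -(μ • ⁅y, z⁆) := by rw [hxy, lie_smul, ← lie_skew, smul_neg]
  rw [hx_yz, hzx, lie_zero, add_zero, hz_xy, smul_neg, smul_smul, ← sub_eq_add_neg,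
    ← sub_smul, smul_eq_zero] at h
  have : μ * (1 - l) = 0 := by linear_combination h.resolve_right hyz
  exact (sub_eq_zero.mp ((mul_eq_zero.mp this).resolve_left hμ)).symm

end HomJacobi

namespace Matrix

variable {m R : Type*} [Fintype m] [DecidableEq m] [CommRing R]

theorem lie_diagonal_single (d : m → R) (i j : m) (c : R) :
    ⁅diagonal d, single i j c⁆ = (d i - d j) • single i j c := by
  ext a b
  simp only [Ring.lie_def, sub_apply, diagonal_mul, mul_diagonal, smul_apply, single_apply,
    smul_eq_mul]
  split_ifs with hab
  · obtain ⟨rfl, rfl⟩ := hab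
    ring
  · simp

theorem lie_single_single_same {i j k : m} (hki : k ≠ i) (a b : R) :
    ⁅single i j a, single j k b⁆ = single i k (a * b) := by
  simp [Ring.lie_def, hki]

theorem lie_single_single_of_ne {i j k l : m} (hjk : j ≠ k) (hli : l ≠ i) (a b : R) :
    ⁅single i j a, single k l b⁆ = 0 := by
  simp [Ring.lie_def, hjk, hli]

end Matrix

/-- The Hom-Jacobi identity for `ȷ(λ)` on the periplectic Lie superalgebra `P(n-1)` at
the even elements `x = E 1 1 - E 2 2 - E (n+1) (n+1) + E (n+2) (n+2)`, `y = E 1 2` and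
the odd element `z = E 1 (n+2) + E 2 (n+1)` (1-based indexing) forces `λ = 1`. -/
theorem jmap_homJacobi_periplectic_forces_lambda_eq_one (n : ℕ) (hn : 3 ≤ n) (l : ℂ)
    (x y z : Matrix (Fin (2 * n)) (Fin (2 * n)) ℂ)
    (hx : x = Matrix.single ⟨0, by omega⟩ ⟨0, by omega⟩ (1 : ℂ) -
              Matrix.single ⟨1, by omega⟩ ⟨1, by omega⟩ (1 : ℂ) -
              Matrix.single ⟨n, by omega⟩ ⟨n, by omega⟩ (1 : ℂ) +
              Matrix.single ⟨n + 1, by omega⟩ ⟨n + 1, by omega⟩ (1 : ℂ))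
    (hy : y = Matrix.single ⟨0, by omega⟩ ⟨1, by omega⟩ (1 : ℂ))
    (hz : z = Matrix.single ⟨0, by omega⟩ ⟨n + 1, by omega⟩ (1 : ℂ) +
              Matrix.single ⟨1, by omega⟩ ⟨n, by omega⟩ (1 : ℂ))
    (h : ⁅x, ⁅y, z⁆⁆ + ⁅y, ⁅z, x⁆⁆ + l • ⁅z, ⁅x, y⁆⁆ = 0) :
    l = 1 := by
  -- Mathlib makes the commutator Lie ring of an associative ring a local instance only.
  let : LieRing (Matrix (Fin (2 * n)) (Fin (2 * n)) ℂ) := LieRing.ofAssociativeRing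
  set i₀ : Fin (2 * n) := ⟨0, by omega⟩
  set i₁ : Fin (2 * n) := ⟨1, by omega⟩
  set iₙ : Fin (2 * n) := ⟨n, by omega⟩
  set iₙ₁ : Fin (2 * n) := ⟨n + 1, by omega⟩
  set d : Fin (2 * n) → ℂ :=
    Pi.single i₀ 1 - Pi.single i₁ 1 - Pi.single iₙ 1 + Pi.single iₙ₁ 1
  have hxd : x = diagonal d := by
    simp only [hx, d, ← diagonal_single, diagonal_add, diagonal_sub]
    rfl
  have hd : d i₀ = 1 ∧ d i₁ = -1 ∧ d iₙ = -1 ∧ d iₙ₁ = 1 := by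
    have hn0 : n ≠ 0 := by omega
    have hn1 : n ≠ 1 := by omega
    simp [d, i₀, i₁, iₙ, iₙ₁, hn0, hn1, hn0.symm, hn1.symm]
  have hxy : ⁅x, y⁆ = (2 : ℂ) • y := by
    rw [hxd, hy, lie_diagonal_single, hd.1, hd.2.1]
    norm_num
  have hxz : ⁅x, z⁆ = 0 := by
    simp only [hxd, hz, lie_add, lie_diagonal_single, hd.1, hd.2.1, hd.2.2.1, hd.2.2.2]
    simp
  have hyz : ⁅y, z⁆ = single i₀ iₙ 1 := by
    simp only [hy, hz, lie_add]
    rw [lie_single_single_of_ne (by simp [i₀, i₁]) (by simp [i₀, iₙ₁]),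
      lie_single_single_same (by simp [i₀, iₙ]; omega), zero_add, mul_one]
  refine eq_one_of_lie_add_lie_add_smul_lie_eq_zero two_ne_zero hxy hxz ?_ h
  intro hyz_eq_zero
  simpa [hyz] using congrFun (congrFun hyz_eq_zero i₀) iₙ
end
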